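/- arXiv:1808.01484 — 2 statements merged into one kernel-verified Lean document; each statement's English description precedes it below -/
import Mathlib

section
/- Let S be a recurrent, strongly aperiodic random walk on ℤ with potential kernel a, and write a†(x) = 1{x=0} + a(x). For distinct nonzero points 0, y ∈ ℤ and any starting point x ∉ {0,y}, the probability that the walk started at x hits y before hitting 0 equals (a†(x) + a(−y) − a(x−y)) / (a(y) + a(−y)). -/
open Filter Topology

/-- `pn p n x` is the `n`-step transition probability `P[S_n = x]`. -/
noncomputable def pn (p : ℤ → ℝ) : ℕ → ℤ → ℝ
  | 0, x => if x = 0 then 1 else 0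
  | n + 1, x => ∑' y : ℤ, pn p n y * p (x - y)

/-- `pk p B n x y = P[x + S_n = y, σ^x_B > n]`: transition probabilities of the
walk killed on first entrance (at a time `≥ 1`) into `B`. -/
noncomputable def pk (p : ℤ → ℝ) (B : Set ℤ) : ℕ → ℤ → ℤ → ℝ
  | 0, x, y => if x = y then 1 else 0
  | n + 1, x, y => Set.indicator Bᶜ (fun w => ∑' z : ℤ, pk p B n x z * p (w - z)) y

/-- `P[σ^x_{{y}} < σ^x_{{0}}]`: the probability that the walk started at `x`
hits `y` before hitting `0`, expressed by summing over the time and the position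
from which the first entrance into `{0, y}` happens, landing at `y`. -/
noncomputable def hitBefore (p : ℤ → ℝ) (x y : ℤ) : ℝ :=
  ∑' n : ℕ, ∑' z : ℤ, pk p {0, y} n x z * p (y - z)

lemma pn_nonneg {p : ℤ → ℝ} (hp0 : ∀ x, 0 ≤ p x) : ∀ n x, 0 ≤ pn p n x
  | 0, x => by simp only [pn]; split <;> norm_num
  | n+1, x => tsum_nonneg fun y => mul_nonneg (pn_nonneg hp0 n y) (hp0 _)

/-- convolution index equiv : (x,y) ↦ (y, x - y) -/
def cequiv : ℤ × ℤ ≃ ℤ × ℤ where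
  toFun q := (q.2, q.1 - q.2)
  invFun q := (q.1 + q.2, q.1)
  left_inv q := by ext <;> simp
  right_inv q := by ext <;> simp

lemma conv_prod_summable {g h : ℤ → ℝ} (hg : Summable g) (hh : Summable h) :
    Summable (fun q : ℤ × ℤ => g q.2 * h (q.1 - q.2)) := by
  have hs : Summable (fun q : ℤ × ℤ => g q.1 * h q.2) :=
    summable_mul_of_summable_norm (by simpa [Real.norm_eq_abs] using hg.abs)
      (by simpa [Real.norm_eq_abs] using hh.abs)
  exact (cequiv.summable_iff.2 hs)

lemma conv_summable {g h : ℤ → ℝ} (hg : Summable g) (hh : Summable h) (x : ℤ) :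
    Summable (fun z : ℤ => g z * h (x - z)) :=
  (conv_prod_summable hg hh).prod_factor x

lemma hasSum_conv {g h : ℤ → ℝ} {c d : ℝ} (hg : HasSum g c) (hh : HasSum h d) :
    HasSum (fun x : ℤ => ∑' y : ℤ, g y * h (x - y)) (c * d) := by
  have hsum : Summable (fun q : ℤ × ℤ => g q.1 * h q.2) :=
    summable_mul_of_summable_norm (by simpa [Real.norm_eq_abs] using hg.summable.abs)
      (by simpa [Real.norm_eq_abs] using hh.summable.abs)
  have hmul : HasSum (fun q : ℤ × ℤ => g q.1 * h q.2) (c * d) := hg.mul hh hsum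
  have hmul2 : HasSum (fun q : ℤ × ℤ => g q.2 * h (q.1 - q.2)) (c * d) :=
    (cequiv.hasSum_iff.2 hmul)
  exact hmul2.prod_fiberwise fun x => (hmul2.summable.prod_factor x).hasSum

lemma pn_hasSum {p : ℤ → ℝ} (hp1 : HasSum p 1) : ∀ n, HasSum (pn p n) 1
  | 0 => by simpa [pn] using hasSum_ite_eq (0 : ℤ) (1:ℝ)
  | n+1 => by
      have := hasSum_conv (pn_hasSum hp1 n) hp1
      rw [one_mul] at this
      exact this

lemma pn_le_one {p : ℤ → ℝ} (hp0 : ∀ x, 0 ≤ p x) (hp1 : HasSum p 1) (n : ℕ) (x : ℤ) :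
    pn p n x ≤ 1 :=
  le_hasSum (pn_hasSum hp1 n) x fun j _ => pn_nonneg hp0 n j

lemma pn_conv {p : ℤ → ℝ} (n : ℕ) (x w : ℤ) :
    ∑' z : ℤ, pn p n (z - x) * p (w - z) = pn p (n+1) (w - x) := by
  have h2 : ∑' z : ℤ, pn p n (z - x) * p (w - z)
      = ∑' u : ℤ, pn p n u * p ((w - x) - u) := by
    refine (tsum_congr fun z => ?_).trans
      ((Equiv.subRight x).tsum_eq (fun u => pn p n u * p ((w - x) - u)))
    simp only [Equiv.subRight_apply]
    congr 2
    ring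
  rw [h2]; rfl

lemma summable_pn_shift_mul {p : ℤ → ℝ} (hp1 : HasSum p 1) (n : ℕ) (x w : ℤ) :
    Summable (fun z : ℤ => pn p n (z - x) * p (w - z)) := by
  have hs := conv_summable (pn_hasSum hp1 n).summable hp1.summable (w - x)
  have h2 := (Equiv.subRight x).summable_iff.2 hs
  refine h2.congr fun z => ?_
  simp only [Function.comp, Equiv.subRight_apply]
  congr 2
  ring

section pkl
variable {p : ℤ → ℝ}

lemma pk_nonneg (hp0 : ∀ x, 0 ≤ p x) (B : Set ℤ) : ∀ n x z, 0 ≤ pk p B n x z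
  | 0, x, z => by simp only [pk]; split <;> norm_num
  | n+1, x, z => Set.indicator_nonneg
      (fun w _ => tsum_nonneg fun u => mul_nonneg (pk_nonneg hp0 B n x u) (hp0 _)) z

lemma pk_le_pn (hp0 : ∀ x, 0 ≤ p x) (hp1 : HasSum p 1) (B : Set ℤ) :
    ∀ n x z, pk p B n x z ≤ pn p n (z - x)
  | 0, x, z => by
      simp only [pk, pn, sub_eq_zero]
      rcases eq_or_ne x z with h | h
      · simp [h]
      · simp [h, Ne.symm h]
  | n+1, x, z => by
      simp only [pk]
      rcases Classical.em (z ∈ B) with hz | hz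
      case inl =>
        rw [Set.indicator_of_notMem (by simpa using hz)]
        exact pn_nonneg hp0 _ _
      rw [Set.indicator_of_mem (by simpa using hz : z ∈ Bᶜ)]
      · 
        calc ∑' u : ℤ, pk p B n x u * p (z - u)
            ≤ ∑' u : ℤ, pn p n (u - x) * p (z - u) := by
              refine Summable.tsum_le_tsum (fun u => ?_) ?_ (summable_pn_shift_mul hp1 n x z)
              · exact mul_le_mul_of_nonneg_right (pk_le_pn hp0 hp1 B n x u) (hp0 _)
              · exact (summable_pn_shift_mul hp1 n x z).of_nonneg_of_le
                  (fun u => mul_nonneg (pk_nonneg hp0 B n x u) (hp0 _))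
                  (fun u => mul_le_mul_of_nonneg_right (pk_le_pn hp0 hp1 B n x u) (hp0 _))
          _ = pn p (n+1) (z - x) := pn_conv n x z

lemma summable_pk_mul (hp0 : ∀ x, 0 ≤ p x) (hp1 : HasSum p 1) (B : Set ℤ) (n : ℕ) (x w : ℤ) :
    Summable (fun z : ℤ => pk p B n x z * p (w - z)) :=
  (summable_pn_shift_mul hp1 n x w).of_nonneg_of_le
    (fun u => mul_nonneg (pk_nonneg hp0 B n x u) (hp0 _))
    (fun u => mul_le_mul_of_nonneg_right (pk_le_pn hp0 hp1 B n x u) (hp0 _))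

/-- entrance density bound -/
lemma fe_le_one (hp0 : ∀ x, 0 ≤ p x) (hp1 : HasSum p 1) (B : Set ℤ) (n : ℕ) (x yy : ℤ) :
    ∑' z : ℤ, pk p B n x z * p (yy - z) ≤ 1 := by
  calc ∑' z : ℤ, pk p B n x z * p (yy - z)
      ≤ ∑' z : ℤ, pn p n (z - x) * p (yy - z) :=
        Summable.tsum_le_tsum (fun u => mul_le_mul_of_nonneg_right (pk_le_pn hp0 hp1 B n x u) (hp0 _))
          (summable_pk_mul hp0 hp1 B n x yy) (summable_pn_shift_mul hp1 n x yy)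
    _ = pn p (n+1) (yy - x) := pn_conv n x yy
    _ ≤ 1 := pn_le_one hp0 hp1 _ _

lemma fe_nonneg (hp0 : ∀ x, 0 ≤ p x) (B : Set ℤ) (n : ℕ) (x yy : ℤ) :
    0 ≤ ∑' z : ℤ, pk p B n x z * p (yy - z) :=
  tsum_nonneg fun u => mul_nonneg (pk_nonneg hp0 B n x u) (hp0 _)

lemma pk_le_one (hp0 : ∀ x, 0 ≤ p x) (hp1 : HasSum p 1) (B : Set ℤ) (n : ℕ) (x z : ℤ) :
    pk p B n x z ≤ 1 :=
  (pk_le_pn hp0 hp1 B n x z).trans (pn_le_one hp0 hp1 _ _)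

lemma pk_target_mem (B : Set ℤ) {w x : ℤ} (hw : w ∈ B) (hxw : x ≠ w) :
    ∀ n, pk p B n x w = 0
  | 0 => by simp [pk, hxw]
  | n+1 => by
      simp only [pk]
      exact Set.indicator_of_notMem (by simpa using hw) _

lemma pk_empty : ∀ (n : ℕ) (x w : ℤ), pk p (∅ : Set ℤ) n x w = pn p n (w - x)
  | 0, x, w => by
      simp only [pk, pn, sub_eq_zero]
      rcases eq_or_ne x w with h | h
      · simp [h]
      · simp [h, Ne.symm h]
  | n+1, x, w => by
      simp only [pk, Set.compl_empty, Set.indicator_univ]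
      rw [← pn_conv n x w]
      exact tsum_congr fun z => by rw [pk_empty n x z]

/-- The first-entrance (into the extra point `yy`) decomposition. -/
lemma pk_decomp (hp0 : ∀ x, 0 ≤ p x) (hp1 : HasSum p 1) (B : Set ℤ) (yy : ℤ) (hyB : yy ∉ B)
    (x : ℤ) : ∀ (n : ℕ) (w : ℤ), pk p B n x w =
      pk p (B ∪ {yy}) n x w
      + ∑ j ∈ Finset.range n,
          (∑' z : ℤ, pk p (B ∪ {yy}) j x z * p (yy - z)) * pk p B (n - 1 - j) yy w
  | 0, w => by simp [pk]
  | n+1, w => by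
      rcases Classical.em (w ∈ B) with hwB | hwB
      · -- both sides are 0
        have h1 : pk p B (n+1) x w = 0 := by
          simp only [pk]; exact Set.indicator_of_notMem (by simpa using hwB) _
        have h2 : pk p (B ∪ {yy}) (n+1) x w = 0 := by
          simp only [pk]
          exact Set.indicator_of_notMem (by simp [hwB]) _
        rw [h1, h2, zero_add]
        refine (Finset.sum_eq_zero fun j hj => ?_).symm
        rcases Nat.eq_or_lt_of_le (Nat.le_of_lt_succ (Finset.mem_range.1 hj)) with hje | hjl
        · have : n + 1 - 1 - j = 0 := by omega
          rw [this]
          have : pk p B 0 yy w = 0 := by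
            simp only [pk]
            have : yy ≠ w := fun hc => hyB (hc ▸ hwB)
            simp [this]
          rw [this, mul_zero]
        · have hk : ∃ k, n + 1 - 1 - j = k + 1 := ⟨n - 1 - j, by omega⟩
          obtain ⟨k, hk⟩ := hk
          rw [hk]
          have : pk p B (k+1) yy w = 0 := by
            simp only [pk]; exact Set.indicator_of_notMem (by simpa using hwB) _
          rw [this, mul_zero]
      · -- w ∉ B
        have hcompl : w ∈ Bᶜ := hwB
        have hrw : pk p B (n+1) x w = ∑' z : ℤ, pk p B n x z * p (w - z) := by
          simp only [pk]; exact Set.indicator_of_mem hcompl _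
        rw [hrw]
        have hstep : ∀ z : ℤ, pk p B n x z * p (w - z)
            = pk p (B ∪ {yy}) n x z * p (w - z)
              + ∑ j ∈ Finset.range n,
                  (∑' u : ℤ, pk p (B ∪ {yy}) j x u * p (yy - u))
                    * (pk p B (n - 1 - j) yy z * p (w - z)) := by
          intro z
          rw [pk_decomp hp0 hp1 B yy hyB x n z, add_mul, Finset.sum_mul]
          congr 1
          exact Finset.sum_congr rfl fun j _ => by ring
        rw [tsum_congr hstep]
        rw [Summable.tsum_add (summable_pk_mul hp0 hp1 _ n x w) ?sum2]
        case sum2 =>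
          apply summable_sum
          intro j _
          exact (summable_pk_mul hp0 hp1 B (n-1-j) yy w).mul_left _
        rw [Summable.tsum_finsetSum (fun j _ => (summable_pk_mul hp0 hp1 B (n-1-j) yy w).mul_left _)]
        have hterm : ∀ j ∈ Finset.range n,
            ∑' z : ℤ, (∑' u : ℤ, pk p (B ∪ {yy}) j x u * p (yy - u))
                * (pk p B (n - 1 - j) yy z * p (w - z))
            = (∑' u : ℤ, pk p (B ∪ {yy}) j x u * p (yy - u)) * pk p B (n - j) yy w := by
          intro j hj
          rw [tsum_mul_left]
          congr 1
          have hnj : n - j = (n - 1 - j) + 1 := by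
            have := Finset.mem_range.1 hj; omega
          rw [hnj]
          simp only [pk]
          exact (Set.indicator_of_mem hcompl (fun v => ∑' z : ℤ, pk p B (n-1-j) yy z * p (v - z))).symm
        rw [Finset.sum_congr rfl hterm]
        -- now handle first term: whether w = yy or not
        rcases eq_or_ne w yy with hwy | hwy
        · have h2 : pk p (B ∪ {yy}) (n+1) x w = 0 := by
            simp only [pk]
            exact Set.indicator_of_notMem (by simp [hwy]) _
          rw [h2, zero_add, Finset.sum_range_succ]
          have hlast : n + 1 - 1 - n = 0 := by omega
          rw [hlast]
          have hpk0 : pk p B 0 yy w = 1 := by simp [pk, hwy]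
          rw [hpk0, mul_one]
          have hidx : ∀ j ∈ Finset.range n,
              (∑' (z : ℤ), pk p (B ∪ {yy}) j x z * p (yy - z)) * pk p B (n + 1 - 1 - j) yy w
              = (∑' (z : ℤ), pk p (B ∪ {yy}) j x z * p (yy - z)) * pk p B (n - j) yy w := by
            intro j hj
            have := Finset.mem_range.1 hj
            have h : n + 1 - 1 - j = n - j := by omega
            rw [h]
          rw [Finset.sum_congr rfl hidx, hwy]
          exact add_comm _ _
        · have h2 : pk p (B ∪ {yy}) (n+1) x w
              = ∑' z : ℤ, pk p (B ∪ {yy}) n x z * p (w - z) := by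
            simp only [pk]
            refine Set.indicator_of_mem ?_ _
            simp only [Set.mem_compl_iff, Set.mem_union, Set.mem_singleton_iff]
            push_neg
            exact ⟨hwB, hwy⟩
          rw [h2, Finset.sum_range_succ]
          have hlast : pk p B (n + 1 - 1 - n) yy w = 0 := by
            have h : n + 1 - 1 - n = 0 := by omega
            rw [h]
            simp [pk, Ne.symm hwy]
          rw [hlast, mul_zero, add_zero]
          congr 1
end pkl


lemma psum_summable {c : ℕ → ℝ} (h0 : ∀ n, 0 ≤ c n) (h1 : ∀ n, c n ≤ 1) {s : ℝ}
    (hs0 : 0 ≤ s) (hs1 : s < 1) : Summable (fun n => c n * s ^ n) :=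
  (summable_geometric_of_lt_one hs0 hs1).of_nonneg_of_le
    (fun n => mul_nonneg (h0 n) (pow_nonneg hs0 n))
    (fun n => mul_le_of_le_one_left (pow_nonneg hs0 n) (h1 n))

lemma cauchy_shift {A Bq : ℕ → ℝ} (hA0 : ∀ n, 0 ≤ A n) (hA1 : ∀ n, A n ≤ 1)
    (hB0 : ∀ n, 0 ≤ Bq n) (hB1 : ∀ n, Bq n ≤ 1) {s : ℝ} (hs0 : 0 ≤ s) (hs1 : s < 1) :
    ∑' n : ℕ, (∑ j ∈ Finset.range n, A j * Bq (n - 1 - j)) * s ^ n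
      = (∑' j : ℕ, A j * s ^ (j+1)) * (∑' k : ℕ, Bq k * s ^ k) := by
  have hAs : Summable (fun n => A n * s ^ n) := psum_summable hA0 hA1 hs0 hs1
  have hBs : Summable (fun n => Bq n * s ^ n) := psum_summable hB0 hB1 hs0 hs1
  have h1 : (∑' j : ℕ, A j * s ^ (j+1)) = s * ∑' j : ℕ, A j * s ^ j := by
    rw [← tsum_mul_left]; exact tsum_congr fun j => by ring
  have hprod : (∑' j : ℕ, A j * s^j) * (∑' k : ℕ, Bq k * s^k)
      = ∑' n : ℕ, ∑ k ∈ Finset.range (n+1), (A k * s^k) * (Bq (n-k) * s^(n-k)) :=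
    tsum_mul_tsum_eq_tsum_sum_range_of_summable_norm
      (by simp only [Real.norm_eq_abs]; exact hAs.abs)
      (by simp only [Real.norm_eq_abs]; exact hBs.abs)
  have hinner : ∀ n : ℕ, ∑ k ∈ Finset.range (n+1), (A k * s^k) * (Bq (n-k) * s^(n-k))
      = (∑ k ∈ Finset.range (n+1), A k * Bq (n-k)) * s ^ n := by
    intro n
    rw [Finset.sum_mul]
    refine Finset.sum_congr rfl fun k hk => ?_
    have hkn : k ≤ n := Nat.le_of_lt_succ (Finset.mem_range.1 hk)
    have : s ^ k * s ^ (n - k) = s ^ n := by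
      rw [← pow_add]; congr 1; omega
    calc (A k * s^k) * (Bq (n-k) * s^(n-k)) = A k * Bq (n-k) * (s^k * s^(n-k)) := by ring
      _ = A k * Bq (n-k) * s ^ n := by rw [this]
  -- LHS
  set f : ℕ → ℝ := fun n => (∑ j ∈ Finset.range n, A j * Bq (n - 1 - j)) * s ^ n with hf
  have hfs : Summable f := by
    have hb : Summable (fun n : ℕ => (n : ℝ) * s ^ n) := by
      simpa using summable_pow_mul_geometric_of_norm_lt_one 1
        (r := s) (by rwa [Real.norm_eq_abs, abs_of_nonneg hs0])
    refine hb.of_nonneg_of_le (fun n => mul_nonneg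
      (Finset.sum_nonneg fun j _ => mul_nonneg (hA0 j) (hB0 _)) (pow_nonneg hs0 n)) ?_
    intro n
    refine mul_le_mul_of_nonneg_right ?_ (pow_nonneg hs0 n)
    calc ∑ j ∈ Finset.range n, A j * Bq (n - 1 - j)
        ≤ ∑ j ∈ Finset.range n, 1 := Finset.sum_le_sum fun j _ =>
          mul_le_one₀ (hA1 j) (hB0 _) (hB1 _)
      _ = (n : ℝ) := by simp
  have hzero : f 0 = 0 := by simp [hf]
  rw [Summable.tsum_eq_zero_add hfs, hzero, zero_add]
  have hsucc : ∀ n : ℕ, f (n + 1)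
      = s * ((∑ k ∈ Finset.range (n+1), A k * Bq (n-k)) * s ^ n) := by
    intro n
    simp only [hf]
    have hidx : ∀ j, n + 1 - 1 - j = n - j := fun j => by omega
    have hsum : ∑ j ∈ Finset.range (n+1), A j * Bq (n + 1 - 1 - j)
        = ∑ j ∈ Finset.range (n+1), A j * Bq (n - j) :=
      Finset.sum_congr rfl fun j _ => by rw [hidx j]
    rw [hsum, pow_succ]
    ring
  rw [tsum_congr hsucc, tsum_mul_left, h1, mul_assoc, hprod, tsum_congr hinner]


lemma cauchy_shift_summable {A Bq : ℕ → ℝ} (hA0 : ∀ n, 0 ≤ A n) (hA1 : ∀ n, A n ≤ 1)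
    (hB0 : ∀ n, 0 ≤ Bq n) (hB1 : ∀ n, Bq n ≤ 1) {s : ℝ} (hs0 : 0 ≤ s) (hs1 : s < 1) :
    Summable (fun n : ℕ => (∑ j ∈ Finset.range n, A j * Bq (n - 1 - j)) * s ^ n) := by
  have hb : Summable (fun n : ℕ => (n : ℝ) * s ^ n) := by
    simpa using summable_pow_mul_geometric_of_norm_lt_one 1
      (r := s) (by rwa [Real.norm_eq_abs, abs_of_nonneg hs0])
  refine hb.of_nonneg_of_le (fun n => mul_nonneg
    (Finset.sum_nonneg fun j _ => mul_nonneg (hA0 j) (hB0 _)) (pow_nonneg hs0 n)) ?_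
  intro n
  refine mul_le_mul_of_nonneg_right ?_ (pow_nonneg hs0 n)
  calc ∑ j ∈ Finset.range n, A j * Bq (n - 1 - j)
      ≤ ∑ j ∈ Finset.range n, 1 := Finset.sum_le_sum fun j _ =>
        mul_le_one₀ (hA1 j) (hB0 _) (hB1 _)
    _ = (n : ℝ) := by simp

lemma tendsto_psum {c : ℕ → ℝ} (hc : Summable c) :
    Tendsto (fun s : ℝ => ∑' n, c n * s ^ n) (𝓝[Set.Ioo (0:ℝ) 1] 1) (𝓝 (∑' n, c n)) :=
  (Real.tendsto_tsum_powerSeries_nhdsWithin_lt hc.hasSum.tendsto_sum_nat).mono_left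
    (nhdsWithin_mono 1 Set.Ioo_subset_Iio_self)

lemma tendsto_psum_atTop {c : ℕ → ℝ} (h0 : ∀ n, 0 ≤ c n) (h1 : ∀ n, c n ≤ 1)
    (hns : ¬ Summable c) :
    Tendsto (fun s : ℝ => ∑' n, c n * s ^ n) (𝓝[Set.Ioo (0:ℝ) 1] 1) atTop := by
  rw [tendsto_atTop]
  intro M
  have hpar := (not_summable_iff_tendsto_nat_atTop_of_nonneg h0).1 hns
  obtain ⟨N, hN⟩ := (tendsto_atTop.1 hpar (M + 1)).exists
  have hcont : Tendsto (fun s : ℝ => ∑ i ∈ Finset.range N, c i * s ^ i)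
      (𝓝[Set.Ioo (0:ℝ) 1] 1) (𝓝 (∑ i ∈ Finset.range N, c i)) := by
    apply Tendsto.mono_left _ nhdsWithin_le_nhds
    have hc : Continuous fun s : ℝ => ∑ i ∈ Finset.range N, c i * s ^ i := by continuity
    simpa using hc.tendsto 1
  have hev : ∀ᶠ s in 𝓝[Set.Ioo (0:ℝ) 1] 1, M < ∑ i ∈ Finset.range N, c i * s ^ i :=
    hcont.eventually_const_lt (by linarith)
  filter_upwards [hev, self_mem_nhdsWithin] with s hs hmem
  have hsm : Summable (fun n => c n * s ^ n) := psum_summable h0 h1 (le_of_lt hmem.1) hmem.2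
  calc M ≤ ∑ i ∈ Finset.range N, c i * s ^ i := le_of_lt hs
    _ ≤ ∑' n, c n * s ^ n := Summable.sum_le_tsum _ (fun i _ =>
        mul_nonneg (h0 i) (pow_nonneg (le_of_lt hmem.1) i)) hsm

lemma lne : (𝓝[Set.Ioo (0:ℝ) 1] 1).NeBot := right_nhdsWithin_Ioo_neBot (by norm_num)

noncomputable def Aps (p : ℤ → ℝ) (w : ℤ) (s : ℝ) : ℝ := ∑' n : ℕ, pn p n w * s ^ n
noncomputable def Gps (p : ℤ → ℝ) (B : Set ℤ) (x w : ℤ) (s : ℝ) : ℝ :=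
  ∑' n : ℕ, pk p B n x w * s ^ n
noncomputable def Fps (p : ℤ → ℝ) (B : Set ℤ) (x yy : ℤ) (s : ℝ) : ℝ :=
  ∑' j : ℕ, (∑' z : ℤ, pk p B j x z * p (yy - z)) * s ^ (j+1)

section main
variable {p : ℤ → ℝ}

lemma master (hp0 : ∀ x, 0 ≤ p x) (hp1 : HasSum p 1) (B : Set ℤ) (yy : ℤ) (hyB : yy ∉ B)
    (x w : ℤ) {s : ℝ} (hs : s ∈ Set.Ioo (0:ℝ) 1) :
    Gps p B x w s = Gps p (B ∪ {yy}) x w s + Fps p (B ∪ {yy}) x yy s * Gps p B yy w s := by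
  have hs0 : (0:ℝ) ≤ s := le_of_lt hs.1
  have hs1 : s < 1 := hs.2
  have hstep : ∀ n : ℕ, pk p B n x w * s ^ n
      = pk p (B ∪ {yy}) n x w * s ^ n
        + (∑ j ∈ Finset.range n,
            (∑' z : ℤ, pk p (B ∪ {yy}) j x z * p (yy - z)) * pk p B (n - 1 - j) yy w) * s ^ n := by
    intro n
    rw [pk_decomp hp0 hp1 B yy hyB x n w]
    ring
  have hA0 := fun j => fe_nonneg hp0 (B ∪ {yy}) j x yy
  have hA1 := fun j => fe_le_one hp0 hp1 (B ∪ {yy}) j x yy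
  have hB0 := fun k => pk_nonneg hp0 B k yy w
  have hB1 := fun k => pk_le_one hp0 hp1 B k yy w
  calc Gps p B x w s = ∑' n : ℕ, (pk p (B ∪ {yy}) n x w * s ^ n
        + (∑ j ∈ Finset.range n,
            (∑' z : ℤ, pk p (B ∪ {yy}) j x z * p (yy - z)) * pk p B (n - 1 - j) yy w) * s ^ n) :=
        tsum_congr hstep
    _ = Gps p (B ∪ {yy}) x w s + Fps p (B ∪ {yy}) x yy s * Gps p B yy w s := by
        rw [Summable.tsum_add (psum_summable (fun n => pk_nonneg hp0 _ n x w)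
              (fun n => pk_le_one hp0 hp1 _ n x w) hs0 hs1)
            (cauchy_shift_summable hA0 hA1 hB0 hB1 hs0 hs1),
          cauchy_shift hA0 hA1 hB0 hB1 hs0 hs1]
        rfl

lemma emptyInstance (hp0 : ∀ x, 0 ≤ p x) (hp1 : HasSum p 1) (x' w : ℤ) {s : ℝ}
    (hs : s ∈ Set.Ioo (0:ℝ) 1) :
    Aps p (w - x') s = Gps p {0} x' w s + Fps p {0} x' 0 s * Aps p w s := by
  have h := master hp0 hp1 (∅ : Set ℤ) 0 (by simp) x' w hs
  rw [Set.empty_union] at h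
  have h1 : Gps p (∅ : Set ℤ) x' w s = Aps p (w - x') s :=
    tsum_congr fun n => by rw [pk_empty n x' w]
  have h2 : Gps p (∅ : Set ℤ) 0 w s = Aps p w s :=
    tsum_congr fun n => by rw [pk_empty n 0 w, sub_zero]
  rw [h1, h2] at h
  exact h

lemma Gps_zero_target (hx' : x' ≠ 0) {s : ℝ} : Gps p {0} x' 0 s = 0 := by
  have : ∀ n, pk p ({0} : Set ℤ) n x' 0 = 0 := pk_target_mem {0} rfl hx'
  simp [Gps, this]

lemma Aps_zero_ge_one (hp0 : ∀ x, 0 ≤ p x) (hp1 : HasSum p 1) {s : ℝ}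
    (hs : s ∈ Set.Ioo (0:ℝ) 1) : 1 ≤ Aps p 0 s := by
  have h0 : pn p 0 (0:ℤ) * s ^ 0 = 1 := by simp [pn]
  rw [← h0]
  exact Summable.le_tsum (psum_summable (fun n => pn_nonneg hp0 n 0)
    (fun n => pn_le_one hp0 hp1 n 0) (le_of_lt hs.1) hs.2) 0
    (fun j _ => mul_nonneg (pn_nonneg hp0 j 0) (pow_nonneg (le_of_lt hs.1) j))

lemma tendsto_D (hp0 : ∀ x, 0 ≤ p x) (hp1 : HasSum p 1) {a : ℤ → ℝ}
    (ha : ∀ x : ℤ, HasSum (fun n => pn p n 0 - pn p n (-x)) (a x)) (w' : ℤ) :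
    Tendsto (fun s => Aps p 0 s - Aps p w' s) (𝓝[Set.Ioo (0:ℝ) 1] 1) (𝓝 (a (-w'))) := by
  have hsm : Summable (fun n => pn p n 0 - pn p n w') := by
    have := (ha (-w')).summable
    simpa using this
  have hval : (∑' n, (pn p n 0 - pn p n w')) = a (-w') := by
    have := (ha (-w')).tsum_eq
    simpa using this
  have hcongr : ∀ s ∈ Set.Ioo (0:ℝ) 1,
      (∑' n, (pn p n 0 - pn p n w') * s ^ n) = Aps p 0 s - Aps p w' s := by
    intro s hs
    have h1 : Summable (fun n => pn p n 0 * s ^ n) :=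
      psum_summable (fun n => pn_nonneg hp0 n 0) (fun n => pn_le_one hp0 hp1 n 0)
        (le_of_lt hs.1) hs.2
    have h2 : Summable (fun n => pn p n w' * s ^ n) :=
      psum_summable (fun n => pn_nonneg hp0 n w') (fun n => pn_le_one hp0 hp1 n w')
        (le_of_lt hs.1) hs.2
    rw [show (fun n => (pn p n 0 - pn p n w') * s ^ n)
        = fun n => pn p n 0 * s ^ n - pn p n w' * s ^ n from funext fun n => by ring]
    exact Summable.tsum_sub h1 h2
  refine Tendsto.congr' ?_ (hval ▸ tendsto_psum hsm)
  filter_upwards [self_mem_nhdsWithin] with s hs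
  exact hcongr s hs

lemma tendsto_G (hp0 : ∀ x, 0 ≤ p x) (hp1 : HasSum p 1)
    (hrec : ¬ Summable (fun n => pn p n 0)) {a : ℤ → ℝ}
    (ha : ∀ x : ℤ, HasSum (fun n => pn p n 0 - pn p n (-x)) (a x))
    {x' : ℤ} (hx' : x' ≠ 0) (w : ℤ) :
    Tendsto (fun s => Gps p {0} x' w s) (𝓝[Set.Ioo (0:ℝ) 1] 1)
      (𝓝 (a x' + a (-w) - a (x' - w))) := by
  set l := 𝓝[Set.Ioo (0:ℝ) 1] (1:ℝ)
  have hAtop : Tendsto (fun s => Aps p 0 s) l atTop :=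
    tendsto_psum_atTop (fun n => pn_nonneg hp0 n 0) (fun n => pn_le_one hp0 hp1 n 0) hrec
  have hinv : Tendsto (fun s => (Aps p 0 s)⁻¹) l (𝓝 0) := hAtop.inv_tendsto_atTop
  -- identity
  have hident : ∀ s ∈ Set.Ioo (0:ℝ) 1, Gps p {0} x' w s
      = (Aps p (w - x') s - Aps p 0 s) + (Aps p 0 s - Aps p w s)
        + (Aps p w s * (Aps p 0 s)⁻¹) * (Aps p 0 s - Aps p (-x') s) := by
    intro s hs
    have hA0pos : (0:ℝ) < Aps p 0 s := lt_of_lt_of_le one_pos (Aps_zero_ge_one hp0 hp1 hs)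
    have h1 := emptyInstance hp0 hp1 x' w hs
    have h2 := emptyInstance hp0 hp1 x' 0 hs
    rw [Gps_zero_target hx', zero_add, zero_sub] at h2
    -- h2 : Aps p (-x') s = Fps p {0} x' 0 s * Aps p 0 s
    have hF : Fps p {0} x' 0 s = Aps p (-x') s / Aps p 0 s := by
      field_simp at h2 ⊢
      linarith [h2]
    rw [hF] at h1
    have : Gps p {0} x' w s = Aps p (w - x') s - Aps p (-x') s / Aps p 0 s * Aps p w s := by
      linarith [h1]
    rw [this]
    field_simp
    ring
  have T1 : Tendsto (fun s => Aps p (w - x') s - Aps p 0 s) l (𝓝 (-(a (x' - w)))) := by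
    have := (tendsto_D hp0 hp1 ha (w - x')).neg
    rw [show -(w - x') = x' - w by ring] at this
    refine this.congr fun s => by ring
  have T2 : Tendsto (fun s => Aps p 0 s - Aps p w s) l (𝓝 (a (-w))) := tendsto_D hp0 hp1 ha w
  have T3 : Tendsto (fun s => Aps p w s * (Aps p 0 s)⁻¹) l (𝓝 1) := by
    have hmul : Tendsto (fun s => (Aps p 0 s - Aps p w s) * (Aps p 0 s)⁻¹) l (𝓝 (a (-w) * 0)) :=
      T2.mul hinv
    rw [mul_zero] at hmul
    have hone : Tendsto (fun s => Aps p 0 s * (Aps p 0 s)⁻¹) l (𝓝 1) := by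
      refine Tendsto.congr' ?_ tendsto_const_nhds
      filter_upwards [self_mem_nhdsWithin] with s hs
      have hA0pos : (0:ℝ) < Aps p 0 s := lt_of_lt_of_le one_pos (Aps_zero_ge_one hp0 hp1 hs)
      rw [mul_inv_cancel₀ (ne_of_gt hA0pos)]
    have := hone.sub hmul
    rw [sub_zero] at this
    refine this.congr fun s => by ring
  have T4 : Tendsto (fun s => Aps p 0 s - Aps p (-x') s) l (𝓝 (a x')) := by
    have := tendsto_D hp0 hp1 ha (-x')
    rwa [neg_neg] at this
  have := (T1.add T2).add (T3.mul T4)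
  rw [show (-(a (x' - w)) + a (-w) + 1 * a x') = a x' + a (-w) - a (x' - w) by ring] at this
  refine Tendsto.congr' ?_ this
  filter_upwards [self_mem_nhdsWithin] with s hs
  exact (hident s hs).symm

end main


set_option maxHeartbeats 1600000

/-- The hitting-place identity: for a recurrent strongly aperiodic walk with
potential kernel `a`, and `x ∉ {0, y}`, `y ≠ 0`, the probability of hitting `y`
before `0` from `x` equals `(a†(x) + a(−y) − a(x−y)) / (a(y) + a(−y))`,
where `a†(x) = 1_{x=0} + a(x)`. -/
theorem stmt3 (p : ℤ → ℝ) (a : ℤ → ℝ)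
    (hp0 : ∀ x, 0 ≤ p x) (hp1 : HasSum p 1)
    (hrec : ¬ Summable (fun n => pn p n 0))
    (hap : ∀ x : ℤ, ∀ᶠ n in atTop, 0 < pn p n x)
    (ha : ∀ x : ℤ, HasSum (fun n => pn p n 0 - pn p n (-x)) (a x))
    (x y : ℤ) (hy : y ≠ 0) (hx0 : x ≠ 0) (hxy : x ≠ y) :
    hitBefore p x y =
      (((if x = 0 then (1:ℝ) else 0) + a x) + a (-y) - a (x - y)) / (a y + a (-y)) := by
  haveI : (𝓝[Set.Ioo (0:ℝ) 1] (1:ℝ)).NeBot := lne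
  set l := 𝓝[Set.Ioo (0:ℝ) 1] (1:ℝ) with hl
  have ha0 : a 0 = 0 := by
    have h := ha 0
    simp only [neg_zero, sub_self] at h
    exact (hasSum_zero.unique h).symm
  -- the set {0, y} as union
  have hBset : ({0} : Set ℤ) ∪ {y} = {0, y} := Set.singleton_union
  -- limit of G x y
  have hGxy : Tendsto (fun s => Gps p {0} x y s) l (𝓝 (a x + a (-y) - a (x - y))) :=
    tendsto_G hp0 hp1 hrec ha hx0 y
  -- limit of G y y
  have hGyy : Tendsto (fun s => Gps p {0} y y s) l (𝓝 (a y + a (-y))) := by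
    have := tendsto_G hp0 hp1 hrec ha hy y
    rwa [sub_self, ha0, sub_zero] at this
  -- gyy ≥ 1
  have hgyy1 : (1:ℝ) ≤ a y + a (-y) := by
    refine ge_of_tendsto hGyy ?_
    filter_upwards [self_mem_nhdsWithin] with s hs
    have h0 : pk p ({0} : Set ℤ) 0 y y * s ^ 0 = 1 := by simp [pk]
    rw [← h0]
    exact Summable.le_tsum (psum_summable (fun n => pk_nonneg hp0 _ n y y)
      (fun n => pk_le_one hp0 hp1 _ n y y) (le_of_lt hs.1) hs.2) 0
      (fun j _ => mul_nonneg (pk_nonneg hp0 _ j y y) (pow_nonneg (le_of_lt hs.1) j))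
  have hgyy0 : a y + a (-y) ≠ 0 := by linarith
  -- identity G x y = F * G y y on Ioo
  have hid2 : ∀ s ∈ Set.Ioo (0:ℝ) 1,
      Gps p {0} x y s = Fps p {0, y} x y s * Gps p {0} y y s := by
    intro s hs
    have h := master hp0 hp1 ({0} : Set ℤ) y (by simpa using hy) x y hs
    rw [hBset] at h
    have hzero : Gps p {0, y} x y s = 0 := by
      have hz : ∀ n, pk p ({0, y} : Set ℤ) n x y = 0 :=
        pk_target_mem {0, y} (by simp) hxy
      simp [Gps, hz]
    rw [hzero, zero_add] at h
    exact h
  -- summability of the entrance densities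
  have hpkpos := fun n => pk_nonneg hp0 ({0} : Set ℤ) n x y
  have hpartial : ∀ N : ℕ, ∑ n ∈ Finset.range N, pk p {0} n x y
      ≤ a x + a (-y) - a (x - y) := by
    intro N
    have hpart : Tendsto (fun s : ℝ => ∑ n ∈ Finset.range N, pk p {0} n x y * s ^ n) l
        (𝓝 (∑ n ∈ Finset.range N, pk p {0} n x y)) := by
      apply Tendsto.mono_left _ nhdsWithin_le_nhds
      have hc : Continuous fun s : ℝ => ∑ n ∈ Finset.range N, pk p {0} n x y * s ^ n := by
        continuity
      simpa using hc.tendsto 1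
    refine le_of_tendsto_of_tendsto hpart hGxy ?_
    filter_upwards [self_mem_nhdsWithin] with s hs
    exact Summable.sum_le_tsum _ (fun i _ => mul_nonneg (hpkpos i) (pow_nonneg (le_of_lt hs.1) i))
      (psum_summable hpkpos (fun n => pk_le_one hp0 hp1 _ n x y) (le_of_lt hs.1) hs.2)
  have hsumpk : Summable (fun n => pk p {0} n x y) :=
    summable_of_sum_range_le hpkpos hpartial
  have hfe_le : ∀ j : ℕ, (∑' z : ℤ, pk p {0, y} j x z * p (y - z)) ≤ pk p {0} (j+1) x y := by
    intro j
    have h := pk_decomp hp0 hp1 ({0} : Set ℤ) y (by simpa using hy) x (j+1) y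
    rw [hBset] at h
    have hz : pk p ({0, y} : Set ℤ) (j+1) x y = 0 := pk_target_mem {0, y} (by simp) hxy _
    rw [hz, zero_add] at h
    rw [h]
    have hj : j ∈ Finset.range (j+1) := Finset.self_mem_range_succ j
    have hterm : (∑' z : ℤ, pk p {0, y} j x z * p (y - z)) * pk p {0} (j + 1 - 1 - j) y y
        = ∑' z : ℤ, pk p {0, y} j x z * p (y - z) := by
      have hidx : j + 1 - 1 - j = 0 := by omega
      rw [hidx]
      simp [pk]
    calc (∑' z : ℤ, pk p {0, y} j x z * p (y - z))
        = (∑' z : ℤ, pk p {0, y} j x z * p (y - z)) * pk p {0} (j + 1 - 1 - j) y y :=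
          hterm.symm
      _ ≤ ∑ i ∈ Finset.range (j+1),
            (∑' z : ℤ, pk p {0, y} i x z * p (y - z)) * pk p {0} (j + 1 - 1 - i) y y :=
          Finset.single_le_sum (fun i _ => mul_nonneg (fe_nonneg hp0 _ i x y)
            (pk_nonneg hp0 _ _ y y)) hj
  have hsumfe : Summable (fun j : ℕ => ∑' z : ℤ, pk p {0, y} j x z * p (y - z)) := by
    have h1 : Summable (fun j : ℕ => pk p {0} (j+1) x y) :=
      (summable_nat_add_iff 1).2 hsumpk
    exact h1.of_nonneg_of_le (fun j => fe_nonneg hp0 _ j x y) hfe_le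
  -- limit of F
  have hFlim : Tendsto (fun s => Fps p {0, y} x y s) l (𝓝 (hitBefore p x y)) := by
    have hrw : ∀ s : ℝ, Fps p {0, y} x y s
        = s * ∑' j : ℕ, (∑' z : ℤ, pk p {0, y} j x z * p (y - z)) * s ^ j := by
      intro s
      rw [← tsum_mul_left]
      exact tsum_congr fun j => by ring
    have hids : Tendsto (fun s : ℝ => s) l (𝓝 1) := tendsto_id.mono_right nhdsWithin_le_nhds
    have := hids.mul (tendsto_psum hsumfe)
    rw [one_mul] at this
    have hhit : hitBefore p x y = ∑' j : ℕ, ∑' z : ℤ, pk p {0, y} j x z * p (y - z) := rfl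
    rw [← hhit] at this
    exact Tendsto.congr (fun s => (hrw s).symm) this
  -- conclude
  have hlim2 : Tendsto (fun s => Gps p {0} x y s) l (𝓝 (hitBefore p x y * (a y + a (-y)))) := by
    refine Tendsto.congr' ?_ (hFlim.mul hGyy)
    filter_upwards [self_mem_nhdsWithin] with s hs
    exact (hid2 s hs).symm
  have hkey : a x + a (-y) - a (x - y) = hitBefore p x y * (a y + a (-y)) :=
    tendsto_nhds_unique hGxy hlim2
  rw [if_neg hx0, zero_add]
  rw [hkey]
  field_simp
end

section
/- Let λ(θ) = Σ_{x∈ℤ} w_x e^{iθx} be an absolutely convergent trigonometric series and set m(r) = ∫₀^r (Σ_{|x|>t} |w_x|) dt. Then for all real θ ≠ θ′, |λ(θ) − λ(θ′)| ≤ 2·|θ−θ′|·m(1/|θ−θ′|). -/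
/-!
Writing `δ = θ - θ'`, the `x`-th terms of `λ(θ)` and `λ(θ')` differ by at most
`|w x| ‖e^{iδx} - 1‖ ≤ |w x| min 2 |δx| ≤ 2 |δ| |w x| min (1/|δ|) |x|`.
On the other side, `∫₀^r Σ_{|x|>t} |w x| dt = Σ_x |w x| min r |x|`, by integrating the
tail function term by term, which is justified by absolute summability.
-/

open Complex MeasureTheory Set

theorem norm_exp_I_mul_ofReal_mul_ofReal (θ x : ℝ) : ‖exp (I * θ * x)‖ = 1 := by
  rw [mul_assoc, ← ofReal_mul, norm_exp_I_mul_ofReal]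

theorem norm_exp_I_mul_ofReal_sub_one_le_min (s : ℝ) :
    ‖exp (I * s) - 1‖ ≤ min 2 |s| :=
  le_min ((norm_sub_le _ _).trans (by norm_num [norm_exp_I_mul_ofReal]))
    Real.norm_exp_I_mul_ofReal_sub_one_le

theorem min_two_mul_le_two_mul_min_inv {c y : ℝ} (hc : 0 < c) (hy : 0 ≤ y) :
    min 2 (c * y) ≤ 2 * c * min c⁻¹ y := by
  rw [mul_min_of_nonneg _ _ (by positivity), mul_inv_cancel_right₀ hc.ne']
  exact min_le_min_left _ (by nlinarith [mul_nonneg hc.le hy])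

theorem norm_exp_I_mul_sub_exp_I_mul_le {θ θ' : ℝ} (hne : θ ≠ θ') (x : ℝ) :
    ‖exp (I * θ * x) - exp (I * θ' * x)‖ ≤ 2 * |θ - θ'| * min (1 / |θ - θ'|) |x| := by
  have hfac : exp (I * θ * x) - exp (I * θ' * x)
      = exp (I * θ' * x) * (exp (I * ((θ - θ') * x : ℝ)) - 1) := by
    rw [mul_sub, mul_one, ← exp_add]; congr 2; push_cast; ring
  rw [hfac, norm_mul, norm_exp_I_mul_ofReal_mul_ofReal, one_mul, one_div]
  calc _ ≤ min 2 |(θ - θ') * x| := norm_exp_I_mul_ofReal_sub_one_le_min _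
    _ ≤ _ := by
      rw [abs_mul]
      exact min_two_mul_le_two_mul_min_inv (abs_pos.2 (sub_ne_zero.2 hne)) (abs_nonneg _)

theorem summable_ofReal_mul_exp_I_mul {w : ℤ → ℝ} (hw : Summable fun x => |w x|) (θ : ℝ) :
    Summable fun x : ℤ => (w x : ℂ) * exp (I * θ * x) :=
  hw.of_norm_bounded fun x => by
    rw [norm_mul, ← ofReal_intCast, norm_exp_I_mul_ofReal_mul_ofReal, norm_real, mul_one,
      Real.norm_eq_abs]

theorem ite_lt_eq_indicator_Iio (a c : ℝ) :
    (fun t : ℝ => if t < c then a else 0) = (Iio c).indicator fun _ => a := by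
  ext t; simp [indicator_apply]

theorem intervalIntegral_ite_lt (a : ℝ) {c r : ℝ} (hc : 0 ≤ c) (hr : 0 ≤ r) :
    ∫ t in (0 : ℝ)..r, (if t < c then a else 0) = a * min r c := by
  rw [intervalIntegral.integral_of_le hr, integral_Ioc_eq_integral_Ioo, ite_lt_eq_indicator_Iio,
    integral_indicator_const _ measurableSet_Iio, measureReal_restrict_apply measurableSet_Iio,
    inter_comm, Ioo_inter_Iio, Real.volume_real_Ioo_of_le (le_min hr hc), smul_eq_mul, sub_zero,
    mul_comm]

section TailIntegral

variable {ι : Type*} {a c : ι → ℝ}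

theorem summable_abs_mul_min (ha : Summable fun i => |a i|) (hc : ∀ i, 0 ≤ c i) {r : ℝ}
    (hr : 0 ≤ r) : Summable fun i => |a i| * min r (c i) :=
  (ha.mul_right r).of_nonneg_of_le (fun i => mul_nonneg (abs_nonneg _) (le_min hr (hc i)))
    fun _ => mul_le_mul_of_nonneg_left (min_le_left _ _) (abs_nonneg _)

theorem intervalIntegral_tsum_ite_lt [Countable ι] (ha : Summable fun i => |a i|)
    (hc : ∀ i, 0 ≤ c i) {r : ℝ} (hr : 0 ≤ r) :
    ∫ t in (0 : ℝ)..r, ∑' i, (if t < c i then a i else 0) = ∑' i, a i * min r (c i) := by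
  have hint : ∀ i, IntegrableOn (fun t => if t < c i then a i else 0) (Ioc 0 r) := fun i => by
    rw [ite_lt_eq_indicator_Iio]
    exact (integrableOn_const measure_Ioc_lt_top.ne).indicator measurableSet_Iio
  have hnorm : ∀ i, ∫ t in Ioc 0 r, ‖if t < c i then a i else 0‖ = |a i| * min r (c i) := by
    intro i
    rw [← intervalIntegral.integral_of_le hr, ← intervalIntegral_ite_lt _ (hc i) hr]
    congr 1 with t
    split_ifs <;> simp
  rw [intervalIntegral.integral_of_le hr, ← integral_tsum_of_summable_integral_norm hint]
  · refine tsum_congr fun i => ?_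
    rw [← intervalIntegral.integral_of_le hr, intervalIntegral_ite_lt _ (hc i) hr]
  · simpa only [hnorm] using summable_abs_mul_min ha hc hr

end TailIntegral

/-- Erickson's Lemma 5: for an absolutely convergent trigonometric series
`λ(θ) = Σ_{x∈ℤ} w_x e^{iθx}` and `m(r) = ∫₀^r (Σ_{|x|>t} |w_x|) dt`, one has
`|λ(θ) − λ(θ′)| ≤ 2 |θ − θ′| m(1/|θ − θ′|)` for all `θ ≠ θ′`. -/
theorem stmt12 (w : ℤ → ℝ) (hw : Summable (fun x : ℤ => |w x|)) :
    ∀ θ θ' : ℝ, θ ≠ θ' →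
      ‖(∑' x : ℤ, (w x : ℂ) * Complex.exp (Complex.I * θ * x)) -
          ∑' x : ℤ, (w x : ℂ) * Complex.exp (Complex.I * θ' * x)‖ ≤
        2 * |θ - θ'| *
          ∫ t in (0:ℝ)..(1 / |θ - θ'|), ∑' x : ℤ, if t < |(x : ℝ)| then |w x| else 0 := by
  intro θ θ' hne
  have hr : 0 ≤ 1 / |θ - θ'| := by positivity
  have hterm : ∀ x : ℤ,
      ‖(w x : ℂ) * exp (I * θ * x) - (w x : ℂ) * exp (I * θ' * x)‖ ≤
        2 * |θ - θ'| * (|w x| * min (1 / |θ - θ'|) |(x : ℝ)|) := fun x => by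
    rw [← mul_sub, norm_mul, norm_real, Real.norm_eq_abs, mul_left_comm]
    exact mul_le_mul_of_nonneg_left
      (by exact_mod_cast norm_exp_I_mul_sub_exp_I_mul_le hne x) (abs_nonneg _)
  rw [intervalIntegral_tsum_ite_lt hw.abs (fun x => abs_nonneg _) hr,
    ← (summable_ofReal_mul_exp_I_mul hw θ).tsum_sub (summable_ofReal_mul_exp_I_mul hw θ')]
  exact tsum_of_norm_bounded
    ((summable_abs_mul_min hw (fun x => abs_nonneg _) hr).hasSum.mul_left _) hterm
end
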